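/- Let (X_i)_{i∈I} be a cofiltered diagram of Hausdorff spaces with limit X = lim_i X_i and projections p_i : X → X_i. If K ⊆ X is compact, then the canonical map K → lim_i p_i(K) is a homeomorphism; i.e., K = lim_i p_i(K). -/
import Mathlib

variable {I : Type*} [Preorder I]
variable {Xs : I → Type*}

/-- The inverse limit of a diagram of topological spaces indexed by a preorder, realized
as the subspace of compatible families in the product. -/
def InvLim (F : ∀ ⦃i j : I⦄, i ≤ j → Xs i → Xs j) : Type _ :=
  {u : ∀ i, Xs i // ∀ ⦃i j : I⦄ (h : i ≤ j), F h (u i) = u j}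

instance [∀ i, TopologicalSpace (Xs i)] (F : ∀ ⦃i j : I⦄, i ≤ j → Xs i → Xs j) :
    TopologicalSpace (InvLim F) :=
  instTopologicalSpaceSubtype

/-- The limit of the images `p_i(K)`, realized as the subspace of the inverse limit
consisting of families which are componentwise images of points of `K`. -/
def InvLimImages (F : ∀ ⦃i j : I⦄, i ≤ j → Xs i → Xs j) (K : Set (InvLim F)) : Type _ :=
  {u : InvLim F // ∀ i, u.1 i ∈ (fun w : InvLim F => w.1 i) '' K}

instance [∀ i, TopologicalSpace (Xs i)] [∀ i, T2Space (Xs i)]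
    (F : ∀ ⦃i j : I⦄, i ≤ j → Xs i → Xs j) : T2Space (InvLim F) :=
  inferInstanceAs (T2Space {u : ∀ i, Xs i // ∀ ⦃i j : I⦄ (h : i ≤ j), F h (u i) = u j})

instance [∀ i, TopologicalSpace (Xs i)]
    (F : ∀ ⦃i j : I⦄, i ≤ j → Xs i → Xs j) (K : Set (InvLim F)) :
    TopologicalSpace (InvLimImages F K) :=
  instTopologicalSpaceSubtype

instance [∀ i, TopologicalSpace (Xs i)] [∀ i, T2Space (Xs i)]
    (F : ∀ ⦃i j : I⦄, i ≤ j → Xs i → Xs j) (K : Set (InvLim F)) :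
    T2Space (InvLimImages F K) :=
  inferInstanceAs (T2Space {u : InvLim F // ∀ i, u.1 i ∈ (fun w : InvLim F => w.1 i) '' K})

theorem invlim_proj_continuous [∀ i, TopologicalSpace (Xs i)]
    (F : ∀ ⦃i j : I⦄, i ≤ j → Xs i → Xs j) (i : I) :
    Continuous (fun w : InvLim F => w.1 i) :=
  (continuous_apply i).comp continuous_subtype_val

/-- If `X = lim_i X_i` is a cofiltered limit of Hausdorff spaces and
`K ⊆ X` is compact, then the canonical map `K → lim_i p_i(K)` is a homeomorphism. -/
theorem bredon_compact_subset_of_cofiltered_limit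
    [IsDirected I (· ≥ ·)] [Nonempty I]
    [∀ i, TopologicalSpace (Xs i)] [∀ i, T2Space (Xs i)]
    (F : ∀ ⦃i j : I⦄, i ≤ j → Xs i → Xs j)
    (hFc : ∀ ⦃i j : I⦄ (h : i ≤ j), Continuous (F h))
    (hFid : ∀ (i : I) (x : Xs i), F (le_refl i) x = x)
    (hFcomp : ∀ ⦃i j k : I⦄ (hij : i ≤ j) (hjk : j ≤ k) (x : Xs i),
      F hjk (F hij x) = F (hij.trans hjk) x)
    (K : Set (InvLim F)) (hK : IsCompact K) :
    IsHomeomorph (fun k : K =>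
      (⟨k.1, fun i => ⟨k.1, k.2, rfl⟩⟩ : InvLimImages F K)) := by
  have : CompactSpace K := isCompact_iff_compactSpace.mp hK
  rw [isHomeomorph_iff_continuous_bijective]
  constructor
  · exact Continuous.subtype_mk continuous_subtype_val _
  constructor
  · intro a b hab
    exact Subtype.ext (congrArg (fun z : InvLimImages F K => z.1) hab)
  · rintro ⟨u, hu⟩
    -- the sets K ∩ p_i⁻¹ {u.1 i}
    set t : I → Set (InvLim F) := fun i => K ∩ (fun w : InvLim F => w.1 i) ⁻¹' {u.1 i} with ht
    have htcl : ∀ i, IsClosed (t i) := fun i =>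
      (hK.isClosed).inter ((isClosed_singleton).preimage (invlim_proj_continuous F i))
    have htc : ∀ i, IsCompact (t i) := fun i =>
      hK.inter_right ((isClosed_singleton).preimage (invlim_proj_continuous F i))
    have htn : ∀ i, (t i).Nonempty := by
      intro i
      obtain ⟨w, hwK, hw⟩ := hu i
      exact ⟨w, hwK, hw⟩
    have htd : Directed (· ⊇ ·) t := by
      intro i j
      obtain ⟨k, hki, hkj⟩ := directed_of (· ≥ ·) i j
      refine ⟨k, ?_, ?_⟩ <;> rintro w ⟨hwK, hw⟩ <;> refine ⟨hwK, ?_⟩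
      · simp only [Set.mem_preimage, Set.mem_singleton_iff] at hw ⊢
        rw [← w.2 hki, hw, u.2 hki]
      · simp only [Set.mem_preimage, Set.mem_singleton_iff] at hw ⊢
        rw [← w.2 hkj, hw, u.2 hkj]
    obtain ⟨x, hx⟩ :=
      IsCompact.nonempty_iInter_of_directed_nonempty_isCompact_isClosed t htd htn htc htcl
    have hxK : x ∈ K := (Set.mem_iInter.mp hx (Classical.arbitrary I)).1
    have hxu : x = u := by
      apply Subtype.ext
      funext i
      exact (Set.mem_iInter.mp hx i).2
    exact ⟨⟨x, hxK⟩, Subtype.ext hxu⟩
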